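/- arXiv:1704.00461 — 3 statements merged into one kernel-verified Lean document; each statement's English description precedes it below -/
import Mathlib

section
/- Let C and D be cycles in the plane grid graph on ℤ² sharing more than one vertex, and suppose D contains at least one edge in the exterior of C. Then the merged cycle E (the unique minimal cycle whose interior contains the interiors of both C and D) contains at least one edge of D lying in the exterior of C. -/
/-- The unit-square grid graph on `ℤ²`: vertices are lattice points, edges join
points at distance `1`. -/
def gridGraph : SimpleGraph (ℤ × ℤ) where
  Adj u v := (u.1 - v.1).natAbs + (u.2 - v.2).natAbs = 1
  symm := by
    constructor
    intro u v h
    omega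
  loopless := by
    constructor
    intro u h
    simp at h

/-- Embedding of lattice points into the plane. -/
noncomputable def toPlane (z : ℤ × ℤ) : ℝ × ℝ := ((z.1 : ℝ), (z.2 : ℝ))

/-- The closed segment in the plane corresponding to an edge. -/
noncomputable def edgeSeg (e : Sym2 (ℤ × ℤ)) : Set (ℝ × ℝ) :=
  Sym2.lift ⟨fun a b => segment ℝ (toPlane a) (toPlane b),
    fun a b => segment_symm ℝ (toPlane a) (toPlane b)⟩ e

/-- The plane curve traced by (the edges of) a walk. -/
noncomputable def walkCurve {u v : ℤ × ℤ} (w : gridGraph.Walk u v) : Set (ℝ × ℝ) :=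
  ⋃ e ∈ w.edges, edgeSeg e

/-- The interior region of a (closed) walk: points off the curve whose connected
component in the complement of the curve is bounded. -/
noncomputable def cycInterior {u v : ℤ × ℤ} (w : gridGraph.Walk u v) : Set (ℝ × ℝ) :=
  {p | p ∉ walkCurve w ∧ Bornology.IsBounded (connectedComponentIn (walkCurve w)ᶜ p)}

/-- The closed region bounded by a cycle: its interior together with the curve. -/
noncomputable def closedRegion {u v : ℤ × ℤ} (w : gridGraph.Walk u v) : Set (ℝ × ℝ) :=
  cycInterior w ∪ walkCurve w

/-- The closed unit square (tile) with lower-left corner `z`. -/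
noncomputable def tileSquare (z : ℤ × ℤ) : Set (ℝ × ℝ) :=
  Set.Icc (z.1 : ℝ) ((z.1 : ℝ) + 1) ×ˢ Set.Icc (z.2 : ℝ) ((z.2 : ℝ) + 1)

/-- The tiles having the edge `e` on their boundary. -/
noncomputable def tilesOf (e : Sym2 (ℤ × ℤ)) : Set (ℤ × ℤ) :=
  {z | edgeSeg e ⊆ frontier (tileSquare z)}

/-- An edge lies in the interior of a cycle if both unit squares containing it as a
boundary edge are contained in the closed region bounded by the cycle. -/
noncomputable def edgeInInterior {u v : ℤ × ℤ} (w : gridGraph.Walk u v) (e : Sym2 (ℤ × ℤ)) : Prop :=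
  ∀ z ∈ tilesOf e, tileSquare z ⊆ closedRegion w

/-- An edge lies in the exterior of a cycle if both unit squares containing it lie in
the closed exterior (the complement of the open interior). -/
noncomputable def edgeInExterior {u v : ℤ × ℤ} (w : gridGraph.Walk u v) (e : Sym2 (ℤ × ℤ)) : Prop :=
  ∀ z ∈ tilesOf e, tileSquare z ⊆ (cycInterior w)ᶜ

/-- A square lies in the interior of a cycle. -/
noncomputable def squareInside {u v : ℤ × ℤ} (w : gridGraph.Walk u v) (z : ℤ × ℤ) : Prop :=
  tileSquare z ⊆ closedRegion w

/-- A square lies in the exterior of a cycle. -/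
noncomputable def squareOutside {u v : ℤ × ℤ} (w : gridGraph.Walk u v) (z : ℤ × ℤ) : Prop :=
  tileSquare z ⊆ (cycInterior w)ᶜ

/-- The characteristic property of the merged cycle `E` of two cycles `C` and `D`:
`E` consists only of edges of `C` and `D`, the closed region bounded by `E`
contains the closed regions bounded by `C` and by `D`, and every edge of `C` or
`D` either lies on `E` or lies in the interior region of `E`. -/
noncomputable def mergedProp {c d x : ℤ × ℤ} (C : gridGraph.Walk c c)
    (D : gridGraph.Walk d d) (E : gridGraph.Walk x x) : Prop :=
  (∀ e ∈ E.edges, e ∈ C.edges ∨ e ∈ D.edges) ∧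
  closedRegion C ⊆ closedRegion E ∧ closedRegion D ⊆ closedRegion E ∧
  (∀ e, (e ∈ C.edges ∨ e ∈ D.edges) → (e ∈ E.edges ∨ edgeInInterior E e))

/-! Let `e` be an edge of `D` outside `C` that is not on `E`; then `e` lies inside `E`. A point `p`
interior to a square at `e` lies in the bounded interior of `E`, but in an unbounded component `U`
of the complement of the curve `C`. Hence `U` meets the curve `E`, at a point of an edge `f` of `E`;
as that point avoids the curve `C`, `f` is an edge of `D`. The open squares at `f` avoid every grid
curve and touch `U`, so they lie in `U`, and therefore the closed squares avoid the interior of `C`.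
-/

open Set Bornology

lemma inter_nonempty_of_not_isBounded {X : Type*} [TopologicalSpace X] [Bornology X]
    {K U : Set X} {p : X} (hU : IsPreconnected U) (hpU : p ∈ U)
    (hUb : ¬ IsBounded U) (hpK : IsBounded (connectedComponentIn Kᶜ p)) : (U ∩ K).Nonempty := by
  by_contra! hUK
  exact hUb (hpK.subset (hU.subset_connectedComponentIn hpU
    (subset_compl_iff_disjoint_right.mpr (disjoint_iff_inter_eq_empty.mpr hUK))))

lemma intCast_notMem_Ioo (m n : ℤ) : (n : ℝ) ∉ Ioo (m : ℝ) (m + 1) := by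
  rintro ⟨h₁, h₂⟩
  have : m < n := by exact_mod_cast h₁
  have : n < m + 1 := by exact_mod_cast h₂
  omega

lemma interior_tileSquare (z : ℤ × ℤ) :
    interior (tileSquare z) = Ioo (z.1 : ℝ) (z.1 + 1) ×ˢ Ioo (z.2 : ℝ) (z.2 + 1) := by
  rw [tileSquare, interior_prod_eq, interior_Icc, interior_Icc]

lemma interior_tileSquare_nonempty (z : ℤ × ℤ) : (interior (tileSquare z)).Nonempty := by
  rw [interior_tileSquare]
  exact (nonempty_Ioo.mpr (by linarith)).prod (nonempty_Ioo.mpr (by linarith))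

lemma isPreconnected_interior_tileSquare (z : ℤ × ℤ) :
    IsPreconnected (interior (tileSquare z)) :=
  interior_tileSquare z ▸ ((convex_Ioo _ _).prod (convex_Ioo _ _)).isPreconnected

lemma isClosed_tileSquare (z : ℤ × ℤ) : IsClosed (tileSquare z) :=
  isClosed_Icc.prod isClosed_Icc

lemma closure_interior_tileSquare (z : ℤ × ℤ) :
    closure (interior (tileSquare z)) = tileSquare z := by
  rw [interior_tileSquare, closure_prod_eq, closure_Ioo (by simp), closure_Ioo (by simp),
    tileSquare]

lemma toPlane_mem_tileSquare {a : ℤ × ℤ} {m n : ℤ} (h₁ : m ≤ a.1 ∧ a.1 ≤ m + 1)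
    (h₂ : n ≤ a.2 ∧ a.2 ≤ n + 1) : toPlane a ∈ tileSquare (m, n) := by
  simp only [tileSquare, toPlane, mem_prod, mem_Icc]
  exact_mod_cast And.intro h₁ h₂

lemma edgeSeg_mk (a b : ℤ × ℤ) :
    edgeSeg s(a, b) = segment ℝ (toPlane a) (toPlane b) := rfl

lemma isCompact_edgeSeg (e : Sym2 (ℤ × ℤ)) : IsCompact (edgeSeg e) := by
  induction e using Sym2.ind with
  | _ a b =>
    rw [edgeSeg_mk, ← convexHull_pair (𝕜 := ℝ)]
    exact (toFinite _).isCompact_convexHull ℝ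

lemma exists_int_coord_of_mem_edgeSeg {a b : ℤ × ℤ} (h : gridGraph.Adj a b) {q : ℝ × ℝ}
    (hq : q ∈ edgeSeg s(a, b)) : (∃ n : ℤ, q.1 = n) ∨ (∃ n : ℤ, q.2 = n) := by
  have hadj : (a.1 - b.1).natAbs + (a.2 - b.2).natAbs = 1 := h
  obtain ⟨s, t, -, -, hst, rfl⟩ := hq
  rcases (by omega : a.1 = b.1 ∨ a.2 = b.2) with h | h
  · refine .inl ⟨b.1, ?_⟩
    simp only [toPlane, Prod.fst_add, Prod.smul_fst, smul_eq_mul, h]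
    linear_combination (b.1 : ℝ) * hst
  · refine .inr ⟨b.2, ?_⟩
    simp only [toPlane, Prod.snd_add, Prod.smul_snd, smul_eq_mul, h]
    linear_combination (b.2 : ℝ) * hst

lemma edgeSeg_disjoint_interior_tileSquare {a b : ℤ × ℤ} (h : gridGraph.Adj a b)
    (z : ℤ × ℤ) : Disjoint (edgeSeg s(a, b)) (interior (tileSquare z)) := by
  rw [disjoint_right, interior_tileSquare]
  rintro q ⟨hq₁, hq₂⟩ hq
  rcases exists_int_coord_of_mem_edgeSeg h hq with ⟨n, hn⟩ | ⟨n, hn⟩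
  · exact intCast_notMem_Ioo z.1 n (hn ▸ hq₁)
  · exact intCast_notMem_Ioo z.2 n (hn ▸ hq₂)

lemma tilesOf_nonempty {a b : ℤ × ℤ} (h : gridGraph.Adj a b) : (tilesOf s(a, b)).Nonempty := by
  have hadj : (a.1 - b.1).natAbs + (a.2 - b.2).natAbs = 1 := h
  have hseg : edgeSeg s(a, b) ⊆ tileSquare (min a.1 b.1, min a.2 b.2) := by
    rw [edgeSeg_mk]
    exact ((convex_Icc _ _).prod (convex_Icc _ _)).segment_subset
      (toPlane_mem_tileSquare (by omega) (by omega)) (toPlane_mem_tileSquare (by omega) (by omega))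
  refine ⟨(min a.1 b.1, min a.2 b.2), fun q hq => ?_⟩
  rw [frontier, (isClosed_tileSquare _).closure_eq]
  exact ⟨hseg hq, disjoint_left.mp (edgeSeg_disjoint_interior_tileSquare h _) hq⟩

section Walk

variable {u v : ℤ × ℤ} (w : gridGraph.Walk u v)

lemma tilesOf_nonempty_of_mem_edges {e : Sym2 (ℤ × ℤ)} (he : e ∈ w.edges) :
    (tilesOf e).Nonempty := by
  induction e using Sym2.ind with
  | _ a b => exact tilesOf_nonempty (w.adj_of_mem_edges he)

lemma isClosed_walkCurve : IsClosed (walkCurve w) :=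
  (w.edges.finite_toSet.isCompact_biUnion fun e _ => isCompact_edgeSeg e).isClosed

lemma walkCurve_disjoint_interior_tileSquare (z : ℤ × ℤ) :
    Disjoint (walkCurve w) (interior (tileSquare z)) := by
  refine disjoint_iUnion₂_left.mpr fun e he => ?_
  induction e using Sym2.ind with
  | _ a b => exact edgeSeg_disjoint_interior_tileSquare (w.adj_of_mem_edges he) z

lemma isOpen_cycInterior : IsOpen (cycInterior w) := by
  refine isOpen_iff_forall_mem_open.mpr fun p ⟨hp, hb⟩ => ⟨_, fun y hy => ?_,
    (isClosed_walkCurve w).isOpen_compl.connectedComponentIn, mem_connectedComponentIn hp⟩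
  exact ⟨connectedComponentIn_subset _ _ hy, connectedComponentIn_eq hy ▸ hb⟩

variable {w} {p y : ℝ × ℝ}

lemma squareOutside_of_mem_connectedComponentIn (hp : p ∉ walkCurve w)
    (hpw : p ∉ cycInterior w) (hy : y ∈ connectedComponentIn (walkCurve w)ᶜ p) {z : ℤ × ℤ}
    (hyz : y ∈ tileSquare z) : squareOutside w z := by
  set U := connectedComponentIn (walkCurve w)ᶜ p
  have hUw : Disjoint U (cycInterior w) :=
    disjoint_left.mpr fun _ hx ⟨_, hb⟩ => hpw ⟨hp, connectedComponentIn_eq hx ▸ hb⟩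
  obtain ⟨s, hsU, hs⟩ : (U ∩ interior (tileSquare z)).Nonempty :=
    mem_closure_iff.mp ((closure_interior_tileSquare z).symm ▸ hyz) U
      (isClosed_walkCurve w).isOpen_compl.connectedComponentIn hy
  have hsub : interior (tileSquare z) ⊆ U := by
    rw [show U = _ from connectedComponentIn_eq hsU]
    exact (isPreconnected_interior_tileSquare z).subset_connectedComponentIn hs
      (walkCurve_disjoint_interior_tileSquare w z).subset_compl_left
  rw [squareOutside, ← closure_interior_tileSquare z, subset_compl_iff_disjoint_right]
  exact ((hUw.mono_left hsub).symm.closure_right (isOpen_cycInterior w)).symm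

lemma edgeInExterior_of_mem_connectedComponentIn (hp : p ∉ walkCurve w)
    (hpw : p ∉ cycInterior w) (hy : y ∈ connectedComponentIn (walkCurve w)ᶜ p)
    {f : Sym2 (ℤ × ℤ)} (hyf : y ∈ edgeSeg f) : edgeInExterior w f := fun z hz =>
  squareOutside_of_mem_connectedComponentIn hp hpw hy
    ((isClosed_tileSquare z).frontier_subset (hz hyf))

end Walk

theorem merged_cycle_contains_exterior_edge_general (c d x : ℤ × ℤ)
    (C : gridGraph.Walk c c) (D : gridGraph.Walk d d) (E : gridGraph.Walk x x)
    (hext : ∃ e ∈ D.edges, edgeInExterior C e)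
    (hmerge : mergedProp C D E) :
    ∃ e ∈ D.edges, e ∈ E.edges ∧ edgeInExterior C e := by
  obtain ⟨e, heD, heC⟩ := hext
  obtain ⟨hEsub, -, -, hEdge⟩ := hmerge
  rcases hEdge e (.inr heD) with heE | heE
  · exact ⟨e, heD, heE, heC⟩
  obtain ⟨z, hz⟩ := tilesOf_nonempty_of_mem_edges D heD
  obtain ⟨p, hp⟩ := interior_tileSquare_nonempty z
  have hpC : p ∉ walkCurve C :=
    (walkCurve_disjoint_interior_tileSquare C z).notMem_of_mem_right hp
  have hpE : p ∉ walkCurve E :=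
    (walkCurve_disjoint_interior_tileSquare E z).notMem_of_mem_right hp
  have hpCi : p ∉ cycInterior C := heC z hz (interior_subset hp)
  have hpEi : p ∈ cycInterior E := (heE z hz (interior_subset hp)).resolve_right hpE
  obtain ⟨y, hyU, hyE⟩ := inter_nonempty_of_not_isBounded
    isPreconnected_connectedComponentIn (mem_connectedComponentIn hpC)
    (fun hb => hpCi ⟨hpC, hb⟩) hpEi.2
  obtain ⟨f, hfE, hyf⟩ := mem_iUnion₂.mp hyE
  have hfC : f ∉ C.edges := fun hfC =>
    connectedComponentIn_subset _ _ hyU (mem_iUnion₂.mpr ⟨f, hfC, hyf⟩)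
  exact ⟨f, (hEsub f hfE).resolve_left hfC, hfE,
    edgeInExterior_of_mem_connectedComponentIn hpC hpCi hyU hyf⟩

/-- If the cycle `D` contains an edge in the exterior of the cycle `C` (the two
cycles sharing more than one vertex), then the merged cycle `E` contains at
least one edge of `D` lying in the exterior of `C`. -/
theorem merged_cycle_contains_exterior_edge (c d x : ℤ × ℤ)
    (C : gridGraph.Walk c c) (D : gridGraph.Walk d d) (E : gridGraph.Walk x x)
    (hC : C.IsCycle) (hD : D.IsCycle)
    (hshare : ∃ a b : ℤ × ℤ, a ≠ b ∧ a ∈ C.support ∧ a ∈ D.support ∧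
      b ∈ C.support ∧ b ∈ D.support)
    (hext : ∃ e ∈ D.edges, edgeInExterior C e)
    (hE : E.IsCycle) (hmerge : mergedProp C D E) :
    ∃ e ∈ D.edges, e ∈ E.edges ∧ edgeInExterior C e :=
  merged_cycle_contains_exterior_edge_general c d x C D E hext hmerge
end

section
/- Let P = (e_1,…,e_k) be a path of edges in a graph in which each pair of distinct cycles from a fixed edge-disjoint family {E_i} meets in at most one vertex, and suppose vertices i_1,…,i_m form a path in the cycle-intersection graph of the family. If u is a vertex of E_{i_1} and v a vertex of E_{i_m}, then there is a path from u to v using only edges of the cycles E_{i_1},…,E_{i_m}. -/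
/-! Gluing walks inside consecutive cycles of the chain at their common vertices gives a
walk from `u` to `v` along edges of the chain; `Walk.bypass` shortens it to a path without
leaving those edges. -/

namespace SimpleGraph.Walk

variable {V : Type*} {G : SimpleGraph V}

lemma exists_walk_edges_subset_of_mem_support {a c u v : V} (p : G.Walk a c)
    (hu : u ∈ p.support) (hv : v ∈ p.support) :
    ∃ w : G.Walk u v, w.edges ⊆ p.edges := by
  classical
  refine ⟨(p.takeUntil u hu).reverse.append (p.takeUntil v hv), fun e he => ?_⟩
  rw [edges_append, edges_reverse, List.mem_append, List.mem_reverse] at he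
  rcases he with he | he
  · exact p.edges_takeUntil_subset_edges hu he
  · exact p.edges_takeUntil_subset_edges hv he

lemma exists_walk_of_chain {m : ℕ} {a c : Fin (m + 1) → V} (W : ∀ i, G.Walk (a i) (c i))
    (hchain : ∀ i : Fin m, ∃ x, x ∈ (W i.castSucc).support ∧ x ∈ (W i.succ).support)
    {u v : V} (hu : u ∈ (W 0).support) (hv : v ∈ (W (Fin.last m)).support) :
    ∃ w : G.Walk u v, ∀ e ∈ w.edges, ∃ i, e ∈ (W i).edges := by
  induction m generalizing u with
  | zero =>
    obtain ⟨w, hw⟩ := exists_walk_edges_subset_of_mem_support (W 0) hu hv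
    exact ⟨w, fun e he => ⟨0, hw he⟩⟩
  | succ m ih =>
    obtain ⟨x, hx₀, hx₁⟩ := hchain 0
    obtain ⟨w₀, hw₀⟩ := exists_walk_edges_subset_of_mem_support (W 0) hu hx₀
    obtain ⟨w₁, hw₁⟩ := ih (fun i => W i.succ) (fun i => hchain i.succ) hx₁ hv
    refine ⟨w₀.append w₁, fun e he => ?_⟩
    rw [edges_append, List.mem_append] at he
    rcases he with he | he
    · exact ⟨0, hw₀ he⟩
    · obtain ⟨i, hi⟩ := hw₁ e he
      exact ⟨i.succ, hi⟩

end SimpleGraph.Walk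

theorem path_through_chain_of_cycles_general {V : Type*} (G : SimpleGraph V)
    (N : ℕ) (b : Fin N → V) (E : ∀ i, G.Walk (b i) (b i))
    (m : ℕ) (f : Fin (m + 1) → Fin N)
    (hpath : ∀ i : Fin m, ∃ x : V,
      x ∈ (E (f i.castSucc)).support ∧ x ∈ (E (f i.succ)).support)
    (u v : V) (hu : u ∈ (E (f 0)).support) (hv : v ∈ (E (f (Fin.last m))).support) :
    ∃ w : G.Walk u v, w.IsPath ∧ ∀ e ∈ w.edges, ∃ i, e ∈ (E (f i)).edges := by
  classical
  obtain ⟨w, hw⟩ := SimpleGraph.Walk.exists_walk_of_chain (fun i => E (f i)) hpath hu hv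
  exact ⟨w.bypass, w.bypass_isPath, fun e he => hw e (w.edges_bypass_subset_edges he)⟩

/-- If the indices `f 0, f 1, …, f m` form a path in the cycle-intersection graph
of a family of pairwise edge-disjoint cycles `E_i` (any two sharing at most one
vertex), `u` is a vertex of the first cycle and `v` a vertex of the last, then
there is a path from `u` to `v` using only edges of the cycles
`E (f 0), …, E (f m)`. -/
theorem path_through_chain_of_cycles {V : Type*} (G : SimpleGraph V)
    (N : ℕ) (b : Fin N → V) (E : ∀ i, G.Walk (b i) (b i))
    (hcyc : ∀ i, (E i).IsCycle)
    (hedisj : ∀ i j, i ≠ j → ∀ e, e ∈ (E i).edges → e ∉ (E j).edges)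
    (hvert : ∀ i j, i ≠ j →
      Set.Subsingleton {x : V | x ∈ (E i).support ∧ x ∈ (E j).support})
    (m : ℕ) (f : Fin (m + 1) → Fin N) (hf : Function.Injective f)
    (hpath : ∀ i : Fin m, ∃ x : V,
      x ∈ (E (f i.castSucc)).support ∧ x ∈ (E (f i.succ)).support)
    (u v : V) (hu : u ∈ (E (f 0)).support) (hv : v ∈ (E (f (Fin.last m))).support) :
    ∃ w : G.Walk u v, w.IsPath ∧ ∀ e ∈ w.edges, ∃ i, e ∈ (E (f i)).edges :=
  path_through_chain_of_cycles_general G N b E m f hpath u v hu hv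
end

section
/- In oriented bond percolation on the rectangle R = [0,m]×[0,n] (n ≥ 2), it is impossible for both an open oriented left-right crossing of R and a closed dual oriented top-bottom crossing of R to exist, where each dual edge lying in the interior of R is open iff the unique oriented lattice edge it crosses is open. -/
/-!
An open oriented left-right crossing advances one column per step, so it is the graph of a
height function `h` on `[0, m]` with `k + h k` odd. Every endpoint of a dual edge has even
parity, so the dual path never meets this graph. It starts above the graph (its top endpoint
is even) and ends weakly below it, hence one of its edges passes from above to below; by
parity that dual edge crosses the graph's own edge in that column, which is open, so the
dual edge is open as well.
-/

/-- The oriented edges of the oriented bond percolation model in the rectangle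
`R = [0,m] × [0,n]`: oriented edges from `(i,j)` with `i + j` odd to
`(i+1, j±1)`, with both endvertices in `R` (which encodes the boundary
modifications at `j = 0` and `j = n`). -/
def orEdge (m n : ℤ) (u v : ℤ × ℤ) : Prop :=
  Odd (u.1 + u.2) ∧ 0 ≤ u.1 ∧ 0 ≤ u.2 ∧ u.2 ≤ n ∧
  v.1 = u.1 + 1 ∧ v.1 ≤ m ∧ (v.2 = u.2 + 1 ∨ v.2 = u.2 - 1) ∧ 0 ≤ v.2 ∧ v.2 ≤ n

/-- A step of the dual (diamond) lattice: a unit diagonal oriented edge.  The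
dual unit squares are the diamonds centred at lattice points with their four
boundary edges oriented clockwise; every oriented diagonal unit edge arises as a
clockwise boundary edge of exactly one diamond. -/
def diagStep (u v : ℤ × ℤ) : Prop :=
  (v.1 - u.1).natAbs = 1 ∧ (v.2 - u.2).natAbs = 1

/-- The dual oriented edge `f` crosses the lattice oriented edge `e`
perpendicularly: they have the same midpoint and orthogonal directions. -/
def crossesOr (e f : (ℤ × ℤ) × (ℤ × ℤ)) : Prop :=
  e.1.1 + e.2.1 = f.1.1 + f.2.1 ∧ e.1.2 + e.2.2 = f.1.2 + f.2.2 ∧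
  (e.2.1 - e.1.1) * (f.2.1 - f.1.1) + (e.2.2 - e.1.2) * (f.2.2 - f.1.2) = 0

/-- A dual oriented edge is closed iff the unique oriented lattice edge it
crosses perpendicularly is closed. -/
def dualClosedOr (m n : ℤ) (ω : (ℤ × ℤ) × (ℤ × ℤ) → Prop)
    (f : (ℤ × ℤ) × (ℤ × ℤ)) : Prop :=
  ∃ e : (ℤ × ℤ) × (ℤ × ℤ), orEdge m n e.1 e.2 ∧ crossesOr e f ∧ ¬ ω e

theorem List.IsChain.exists_rel_of_head?_eq_some {α : Type*} {R : α → α → Prop} {l : List α}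
    {a : α} (hl : l.IsChain R) (hlen : 2 ≤ l.length) (ha : l.head? = some a) :
    ∃ c, R a c := by
  match l, hl, hlen, ha with
  | x :: c :: _, .cons_cons hxc _, _, ha => exact ⟨c, by simp_all⟩

theorem List.IsChain.exists_rel_of_head_of_getLast {α : Type*} {R : α → α → Prop}
    {P : α → Prop} : ∀ {l : List α} {a b : α}, l.IsChain R → l.head? = some a →
      l.getLast? = some b → P a → ¬ P b → ∃ x y, R x y ∧ P x ∧ ¬ P y
  | [x], a, b, _, ha, hb, hPa, hPb => by simp_all
  | x :: y :: l, a, b, .cons_cons hxy hl, ha, hb, hPa, hPb => by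
    obtain rfl : x = a := by simpa using ha
    by_cases hPy : P y
    · exact hl.exists_rel_of_head_of_getLast rfl (by simpa using hb) hPy hPb
    · exact ⟨x, y, hxy, hPa, hPy⟩

theorem List.IsChain.exists_graph {R : ℤ × ℤ → ℤ × ℤ → Prop}
    (hR : ∀ a b, R a b → b.1 = a.1 + 1) : ∀ {l : List (ℤ × ℤ)} {a b : ℤ × ℤ},
      l.IsChain R → l.head? = some a → l.getLast? = some b →
      b.1 = a.1 + (l.length - 1 : ℕ) ∧
        ∃ h : ℤ → ℤ, h a.1 = a.2 ∧ ∀ k, a.1 ≤ k → k < b.1 → R (k, h k) (k + 1, h (k + 1))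
  | [x], a, b, _, ha, hb => by
    obtain ⟨rfl, rfl⟩ : x = a ∧ x = b := by simp_all
    exact ⟨by simp, fun _ => x.2, rfl, fun k h1 h2 => absurd h2 (not_lt.mpr h1)⟩
  | x :: y :: l, a, b, .cons_cons hxy hl, ha, hb => by
    obtain rfl : x = a := by simpa using ha
    obtain ⟨hb1, h, hy, hh⟩ := hl.exists_graph hR rfl (by simpa using hb)
    have hxy1 := hR x y hxy
    refine ⟨by simp only [List.length_cons] at hb1 ⊢; omega,
      fun k => if k = x.1 then x.2 else h k, by simp, fun k hk1 hk2 => ?_⟩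
    rcases hk1.eq_or_lt with rfl | hk1
    · rw [hxy1] at hy
      convert hxy using 1 <;> ext <;> simp [hxy1, hy]
    · simpa [hk1.ne', (hk1.trans (lt_add_one k)).ne'] using hh k (by omega) hk2

theorem eq_corners_of_crossesOr {u v a b : ℤ × ℤ} (hv1 : v.1 = u.1 + 1)
    (hv2 : v.2 = u.2 + 1 ∨ v.2 = u.2 - 1) (hab : diagStep a b) (hcr : crossesOr (u, v) (a, b)) :
    (a = (u.1, v.2) ∧ b = (v.1, u.2)) ∨ (a = (v.1, u.2) ∧ b = (u.1, v.2)) := by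
  obtain ⟨u1, u2⟩ := u
  obtain ⟨v1, v2⟩ := v
  obtain ⟨a1, a2⟩ := a
  obtain ⟨b1, b2⟩ := b
  obtain ⟨hx, hy⟩ := hab
  obtain ⟨hm1, hm2, hperp⟩ := hcr
  simp only [Prod.mk.injEq] at *
  subst hv1
  rcases hv2 with rfl | rfl <;> omega

theorem even_of_dualClosedOr {m n : ℤ} {ω : (ℤ × ℤ) × (ℤ × ℤ) → Prop} {a b : ℤ × ℤ}
    (hab : diagStep a b) (hcl : dualClosedOr m n ω (a, b)) : Even (a.1 + a.2) := by
  obtain ⟨⟨u, v⟩, ⟨hu, -, -, -, hv1, -, hv2, -⟩, hcr, -⟩ := hcl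
  rw [Int.odd_iff] at hu
  rw [Int.even_iff]
  rcases eq_corners_of_crossesOr hv1 hv2 hab hcr with ⟨rfl, -⟩ | ⟨rfl, -⟩ <;> omega

def IsOpenCrossingProfile (m n : ℤ) (ω : (ℤ × ℤ) × (ℤ × ℤ) → Prop) (h : ℤ → ℤ) : Prop :=
  ∀ k, 0 ≤ k → k < m → orEdge m n (k, h k) (k + 1, h (k + 1)) ∧ ω ((k, h k), (k + 1, h (k + 1)))

theorem exists_isOpenCrossingProfile {m n j₀ j₁ : ℤ} {ω : (ℤ × ℤ) × (ℤ × ℤ) → Prop}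
    {p : List (ℤ × ℤ)} (hlen : 2 ≤ p.length) (hp : p.IsChain fun a b => orEdge m n a b ∧ ω (a, b))
    (h₀ : p.head? = some (0, j₀)) (h₁ : p.getLast? = some (m, j₁)) :
    0 < m ∧ ∃ h, IsOpenCrossingProfile m n ω h := by
  obtain ⟨hm, h, -, hh⟩ := hp.exists_graph (fun a b hab => hab.1.2.2.2.2.1) h₀ h₁
  exact ⟨by simp only at hm; omega, h, hh⟩

namespace IsOpenCrossingProfile

variable {m n : ℤ} {ω : (ℤ × ℤ) × (ℤ × ℤ) → Prop} {h : ℤ → ℤ}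

theorem odd_add_and_le (hh : IsOpenCrossingProfile m n ω h) (hm : 0 < m) {k : ℤ} (hk0 : 0 ≤ k)
    (hkm : k ≤ m) : Odd (k + h k) ∧ 0 ≤ h k ∧ h k ≤ n := by
  rcases hkm.lt_or_eq with hkm | rfl
  · obtain ⟨⟨hodd, -, h0, hn, -⟩, -⟩ := hh k hk0 hkm
    exact ⟨hodd, h0, hn⟩
  · obtain ⟨⟨hodd, -, -, -, -, -, hstep, h0, hn⟩, -⟩ := hh (k - 1) (by omega) (by omega)
    simp only [sub_add_cancel] at hodd hstep h0 hn
    refine ⟨?_, h0, hn⟩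
    rw [Int.odd_iff] at hodd ⊢
    omega

/-- Parity forces a dual edge from above the profile to below it to cross the profile's own,
open, edge in its column. -/
theorem not_dualClosedOr (hh : IsOpenCrossingProfile m n ω h) {a b : ℤ × ℤ}
    (hab : diagStep a b) (ha : h a.1 < a.2) (hb : b.2 ≤ h b.1) : ¬ dualClosedOr m n ω (a, b) := by
  rintro ⟨⟨⟨k, y⟩, ⟨k', y'⟩⟩, ⟨hu, hk0, -, -, hk', hkm, hy', -⟩, hcr, hclosed⟩
  simp only at hu hk0 hk' hkm hy'
  subst hk'
  obtain ⟨⟨hodd, -, -, -, -, -, hstep, -⟩, hopen⟩ := hh k hk0 (by omega)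
  rw [Int.odd_iff] at hu hodd
  have : y = h k ∧ y' = h (k + 1) := by
    rcases eq_corners_of_crossesOr rfl hy' hab hcr with ⟨rfl, rfl⟩ | ⟨rfl, rfl⟩ <;>
      simp only at ha hb hy' hstep <;> omega
  obtain ⟨rfl, rfl⟩ := this
  exact hclosed hopen

end IsOpenCrossingProfile

theorem no_open_oriented_LR_and_closed_dual_oriented_TB_general (m n : ℤ)
    (ω : (ℤ × ℤ) × (ℤ × ℤ) → Prop) :
    ¬ ((∃ p : List (ℤ × ℤ), 2 ≤ p.length ∧
          p.Chain' (fun a b => orEdge m n a b ∧ ω (a, b)) ∧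
          (p.zip p.tail).Nodup ∧
          (∃ j : ℤ, p.head? = some (0, j) ∧ 0 ≤ j ∧ j ≤ n) ∧
          (∃ j : ℤ, p.getLast? = some (m, j) ∧ 0 ≤ j ∧ j ≤ n)) ∧
       (∃ q : List (ℤ × ℤ), 2 ≤ q.length ∧
          q.Chain' (fun a b => diagStep a b ∧ dualClosedOr m n ω (a, b)) ∧
          (q.zip q.tail).Nodup ∧
          (∃ i : ℤ, q.head? = some (i, n) ∧ 0 ≤ i ∧ i ≤ m) ∧
          (∃ i : ℤ, q.getLast? = some (i, 0) ∧ 0 ≤ i ∧ i ≤ m) ∧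
          (∀ x ∈ q, 0 ≤ x.1 ∧ x.1 ≤ m ∧ 0 ≤ x.2 ∧ x.2 ≤ n))) := by
  rintro ⟨⟨p, hplen, hp, -, ⟨j₀, hp₀, -⟩, ⟨j₁, hp₁, -⟩⟩,
    ⟨q, hqlen, hq, -, ⟨i₀, hq₀, hi₀⟩, ⟨i₁, hq₁, hi₁⟩, -⟩⟩
  obtain ⟨hm, h, hh⟩ := exists_isOpenCrossingProfile hplen hp hp₀ hp₁
  have h_start : h i₀ < n := by
    obtain ⟨c, hc, hcl⟩ := List.IsChain.exists_rel_of_head?_eq_some hq hqlen hq₀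
    have heven := even_of_dualClosedOr hc hcl
    obtain ⟨hodd, -, hle⟩ := hh.odd_add_and_le hm hi₀.1 hi₀.2
    rw [Int.even_iff] at heven
    rw [Int.odd_iff] at hodd
    simp only at heven
    omega
  have h_end : ¬ h i₁ < 0 := not_lt.mpr (hh.odd_add_and_le hm hi₁.1 hi₁.2).2.1
  obtain ⟨a, b, ⟨hab, hcl⟩, ha, hb⟩ :=
    List.IsChain.exists_rel_of_head_of_getLast (P := fun x => h x.1 < x.2) hq hq₀ hq₁ h_start h_end
  exact hh.not_dualClosedOr hab ha (not_lt.mp hb) hcl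

/-- In oriented bond percolation on the rectangle `R = [0,m] × [0,n]` (`n ≥ 2`),
it is impossible for both an open oriented left-right crossing of `R` and a
closed dual oriented top-bottom crossing of `R` to exist. -/
theorem no_open_oriented_LR_and_closed_dual_oriented_TB (m n : ℤ) (hn : 2 ≤ n)
    (ω : (ℤ × ℤ) × (ℤ × ℤ) → Prop) :
    ¬ ((∃ p : List (ℤ × ℤ), 2 ≤ p.length ∧
          p.Chain' (fun a b => orEdge m n a b ∧ ω (a, b)) ∧
          (p.zip p.tail).Nodup ∧
          (∃ j : ℤ, p.head? = some (0, j) ∧ 0 ≤ j ∧ j ≤ n) ∧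
          (∃ j : ℤ, p.getLast? = some (m, j) ∧ 0 ≤ j ∧ j ≤ n)) ∧
       (∃ q : List (ℤ × ℤ), 2 ≤ q.length ∧
          q.Chain' (fun a b => diagStep a b ∧ dualClosedOr m n ω (a, b)) ∧
          (q.zip q.tail).Nodup ∧
          (∃ i : ℤ, q.head? = some (i, n) ∧ 0 ≤ i ∧ i ≤ m) ∧
          (∃ i : ℤ, q.getLast? = some (i, 0) ∧ 0 ≤ i ∧ i ≤ m) ∧
          (∀ x ∈ q, 0 ≤ x.1 ∧ x.1 ≤ m ∧ 0 ≤ x.2 ∧ x.2 ≤ n))) :=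
  no_open_oriented_LR_and_closed_dual_oriented_TB_general m n ω
end
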